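/- If σ is an intermezzo ordering of the Multicolor Clique reduction instance, with selected indices p_1,...,p_k (from the selection-phase property), then for all 1 ≤ ℓ ≤ m < k, the only elements of σ that may lie strictly between c^{ℓ,m} and c^{ℓ,m+1} are u^ℓ_{p_ℓ,m} and u^{m+1}_{p_{m+1},ℓ}. -/
import Mathlib


/-- Index type for the elements `c^{i,j}`, `1 ≤ i ≤ j ≤ k` (0-indexed here). -/
abbrev CIdx (k : ℕ) := {p : Fin k × Fin k // p.1 ≤ p.2}

/-- Ground set of the Multicolor Clique reduction: elements `s^i` (`1 ≤ i ≤ k+1`),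
`c^{i,j}` (`1 ≤ i ≤ j ≤ k`) and `u^i_{p,j}` (`1 ≤ i ≤ k`, `1 ≤ p ≤ q`, `0 ≤ j ≤ k`);
all indices are 0-indexed except `j`, which ranges over `0..k` as in the paper. -/
abbrev MCG (k q : ℕ) := Fin (k + 1) ⊕ (CIdx k ⊕ (Fin k × Fin q × Fin (k + 1)))

variable {k q : ℕ}

/-- The element `s^{i+1}` (for 0-indexed `i`). -/
def sE (i : Fin (k + 1)) : MCG k q := Sum.inl i

/-- The element `c^{i+1,j+1}` (for 0-indexed index pair). -/
def cE (c : CIdx k) : MCG k q := Sum.inr (Sum.inl c)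

/-- The element `u^{i+1}_{p+1,j}` (for 0-indexed `i`, `p`; `j` as in the paper). -/
def uE (i : Fin k) (p : Fin q) (j : Fin (k + 1)) : MCG k q :=
  Sum.inr (Sum.inr (i, p, j))

/-- `c^{ℓ+1,m+1}` built from natural number indices. -/
def cP (ℓ m : ℕ) (h1 : ℓ ≤ m) (h2 : m < k) : MCG k q :=
  cE ⟨(⟨ℓ, lt_of_le_of_lt h1 h2⟩, ⟨m, h2⟩), Fin.mk_le_mk.mpr h1⟩

/-- `u^{i+1}_{p+1,j}` built from natural number indices. -/
def uP (i : ℕ) (hi : i < k) (p : Fin q) (j : ℕ) (hj : j < k + 1) : MCG k q :=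
  uE ⟨i, hi⟩ p ⟨j, hj⟩

/-- The pair constraints `B` of the reduction. -/
def Brel : MCG k q → MCG k q → Prop
  | Sum.inl i, Sum.inr (Sum.inr (i', _, _)) => i.val = i'.val
  | Sum.inr (Sum.inr (i, p, j)), Sum.inr (Sum.inr (i', p', j')) =>
      i = i' ∧ (p < p' ∨ (p = p' ∧ j < j'))
  | Sum.inr (Sum.inr (i, p, j)), Sum.inl i' =>
      p.val = 0 ∧ j.val = 0 ∧ i'.val = i.val + 1
  | Sum.inr (Sum.inl c), Sum.inr (Sum.inl c') =>
      c.val.1 < c'.val.1 ∨ (c.val.1 = c'.val.1 ∧ c.val.2 < c'.val.2)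
  | Sum.inl i, Sum.inr (Sum.inl c') =>
      i.val = k ∧ c'.val.1.val = 0 ∧ c'.val.2.val = 0
  | _, _ => False

/-- σ satisfies the pair constraints `B`. -/
def SatB (σ : MCG k q ≃ Fin (Fintype.card (MCG k q))) : Prop :=
  ∀ x y : MCG k q, Brel x y → σ x < σ y

/-- σ fulfills all (intermezzo) triples in `S`. -/
def SatT (σ : MCG k q ≃ Fin (Fintype.card (MCG k q)))
    (S : Set (MCG k q × MCG k q × MCG k q)) : Prop :=
  ∀ t ∈ S, (σ t.1 < σ t.2.1 ∧ σ t.2.1 < σ t.2.2) ∨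
           (σ t.2.1 < σ t.2.2 ∧ σ t.2.2 < σ t.1)

/-- Selection triples `C¹_sel = {(s^{i+1}, u^i_{p,j}, u^i_{p+1,0})}`. -/
def Csel1 : Set (MCG k q × MCG k q × MCG k q) :=
  {t | ∃ (i : Fin k) (p : Fin q) (j : Fin (k + 1)) (hp : p.val + 1 < q),
        1 ≤ j.val ∧
        t = (sE i.succ, uE i p j, uE i ⟨p.val + 1, hp⟩ 0)}

/-- Selection triples `C²_sel = {(u^i_{q,j}, s^i, s^{i+1})}`. -/
def Csel2 (hq : 0 < q) : Set (MCG k q × MCG k q × MCG k q) :=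
  {t | ∃ (i : Fin k) (j : Fin (k + 1)), 1 ≤ j.val ∧
        t = (uE i ⟨q - 1, by omega⟩ j, sE i.castSucc, sE i.succ)}

/-- Selection triples `C³_sel = {(u^i_{p,j}, s^{i+1}, c^{1,1})}`. -/
def Csel3 (hk : 0 < k) : Set (MCG k q × MCG k q × MCG k q) :=
  {t | ∃ (i : Fin k) (p : Fin q) (j : Fin (k + 1)),
        t = (uE i p j, sE i.succ, cP 0 0 le_rfl hk)}

/-- Verification triples `C¹_ver = {(x, c^{i,k}, c^{i+1,i+1})}`. -/
def Cver1 : Set (MCG k q × MCG k q × MCG k q) :=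
  {t | ∃ (i : ℕ) (hi : i + 1 < k) (x : MCG k q),
        x ≠ cP i (k - 1) (by omega) (by omega) ∧
        x ≠ cP (i + 1) (i + 1) le_rfl hi ∧
        t = (x, cP i (k - 1) (by omega) (by omega), cP (i + 1) (i + 1) le_rfl hi)}

/-- Verification triples `C²_ver = {(u^i_{p,j}, c^{ℓ,m}, c^{ℓ,m+1})}` (for the
stated index conditions, written for 0-indexed `i`, `ℓ`, `m`). -/
def Cver2 : Set (MCG k q × MCG k q × MCG k q) :=
  {t | ∃ (i : Fin k) (p : Fin q) (j : Fin (k + 1)) (ℓ m : ℕ)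
        (hℓm : ℓ ≤ m) (hm : m + 1 < k),
        ((i.val ≠ ℓ ∧ i.val ≠ m + 1) ∨ (i.val = m + 1 ∧ j.val ≠ ℓ + 1) ∨
          (i.val = ℓ ∧ j.val ≠ m + 1)) ∧
        t = (uE i p j, cP ℓ m hℓm (by omega), cP ℓ (m + 1) (by omega) hm)}

/-- Verification triples `C³_ver`. -/
def Cver3 : Set (MCG k q × MCG k q × MCG k q) :=
  {t | ∃ (ℓ m : ℕ) (hℓm : ℓ ≤ m) (hm : m + 1 < k) (p : Fin q),
        t = (cP ℓ (m + 1) (by omega) hm, uP ℓ (by omega) p m (by omega),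
             uP ℓ (by omega) p (m + 1) (by omega)) ∨
        t = (cP ℓ (m + 1) (by omega) hm, uP (m + 1) hm p ℓ (by omega),
             uP (m + 1) hm p (ℓ + 1) (by omega))}

/-- Verification triples `C⁴_ver` (depending on the non-edges of `G`). -/
def Cver4 (Gadj : (Fin k × Fin q) → (Fin k × Fin q) → Prop) :
    Set (MCG k q × MCG k q × MCG k q) :=
  {t | ∃ (ℓ m : ℕ) (hℓm : ℓ ≤ m) (hm : m + 1 < k) (p r : Fin q),
        ¬ Gadj (⟨ℓ, by omega⟩, p) (⟨m + 1, hm⟩, r) ∧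
        (t = (uP (m + 1) hm r (ℓ + 1) (by omega), uP ℓ (by omega) p (m + 1) (by omega),
              uP ℓ (by omega) p (m + 2) (by omega)) ∨
         t = (uP ℓ (by omega) p (m + 1) (by omega), uP (m + 1) hm r (ℓ + 1) (by omega),
              uP (m + 1) hm r (ℓ + 2) (by omega)))}

/-- Lexicographic monotonicity of σ on the `c` elements. -/
lemma cP_lt_cP (σ : MCG k q ≃ Fin (Fintype.card (MCG k q))) (hB : SatB σ)
    {a b a' b' : ℕ} (hab : a ≤ b) (hb : b < k) (hab' : a' ≤ b') (hb' : b' < k)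
    (h : a < a' ∨ (a = a' ∧ b < b')) :
    σ (cP a b hab hb) < σ (cP a' b' hab' hb') := by
  apply hB
  show (_ : Fin k) < _ ∨ _
  simpa [Fin.lt_def, Fin.ext_iff] using h

lemma c11_le_cP (hk : 0 < k) (σ : MCG k q ≃ Fin (Fintype.card (MCG k q))) (hB : SatB σ)
    {a b : ℕ} (hab : a ≤ b) (hb : b < k) :
    σ (cP 0 0 le_rfl hk) ≤ σ (cP a b hab hb) := by
  rcases Nat.eq_zero_or_pos b with rfl | hbpos
  · interval_cases a
    exact le_rfl
  · exact le_of_lt (cP_lt_cP σ hB _ _ _ _ (by omega))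

/-- No `u` element with last index `0` lies strictly between `c^{1,1}` and any `c`. -/
lemma noU0 (hk : 0 < k) (σ : MCG k q ≃ Fin (Fintype.card (MCG k q))) (hB : SatB σ)
    (hver : SatT σ (Cver1 ∪ Cver2)) (i : Fin k) (r : Fin q) :
    ∀ (n a b : ℕ) (hab : a ≤ b) (hb : b < k), n = a * k + b →
      σ (cP 0 0 le_rfl hk) < σ (uE i r 0) →
      σ (uE i r 0) < σ (cP a b hab hb) → False := by
  intro n
  induction n using Nat.strong_induction_on with
  | _ n IH =>
    intro a b hab hb hn h1 h2
    have hune : ∀ (a' b' : ℕ) (h1' : a' ≤ b') (h2' : b' < k),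
        (uE i r 0 : MCG k q) ≠ cP a' b' h1' h2' := by
      intro a' b' h1' h2' h
      simp [uE, cP, cE] at h
    rcases Nat.lt_or_ge a b with hlt | hge
    · -- predecessor is (a, b-1)
      obtain ⟨b, rfl⟩ : ∃ b', b = b' + 1 := ⟨b - 1, by omega⟩
      have hpred : σ (cP a b (by omega) (by omega)) < σ (uE i r 0) := by
        have hne := hune a b (by omega) (by omega)
        have : ¬ σ (uE i r 0) < σ (cP a b (by omega) (by omega)) :=
          fun h => IH (a * k + b) (by omega) a b (by omega) (by omega) rfl h1 h
        rcases lt_or_eq_of_le (le_of_not_gt this) with h | h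
        · exact h
        · exact absurd (σ.injective (Fin.ext (by rw [h]))) (Ne.symm hne)
      have hmem : ((uE i r 0, cP a b (by omega) (by omega),
          cP a (b + 1) (by omega) hb) : MCG k q × MCG k q × MCG k q) ∈ Cver1 ∪ Cver2 := by
        right
        exact ⟨i, r, 0, a, b, by omega, hb, by simp only [Fin.val_zero]; omega, rfl⟩
      rcases hver _ hmem with ⟨hx, _⟩ | ⟨_, hx⟩
      · exact absurd hx (not_lt_of_gt hpred)
      · exact absurd h2 (not_lt_of_gt hx)
    · -- a = b
      obtain rfl : a = b := le_antisymm hab hge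
      rcases Nat.eq_zero_or_pos a with rfl | hapos
      · exact absurd h2 (not_lt_of_gt h1)
      · obtain ⟨a, rfl⟩ : ∃ a', a = a' + 1 := ⟨a - 1, by omega⟩
        have hpred : σ (cP a (k - 1) (by omega) (by omega)) < σ (uE i r 0) := by
          have hne := hune a (k - 1) (by omega) (by omega)
          have : ¬ σ (uE i r 0) < σ (cP a (k - 1) (by omega) (by omega)) :=
            fun h => IH (a * k + (k - 1)) (by rw [hn, Nat.add_mul, Nat.one_mul]; omega) a (k - 1)
              (by omega) (by omega) rfl h1 h
          rcases lt_or_eq_of_le (le_of_not_gt this) with h | h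
          · exact h
          · exact absurd (σ.injective (Fin.ext (by rw [h]))) (Ne.symm hne)
        have hmem : ((uE i r 0, cP a (k - 1) (by omega) (by omega),
            cP (a + 1) (a + 1) le_rfl hb) : MCG k q × MCG k q × MCG k q) ∈ Cver1 ∪ Cver2 := by
          left
          exact ⟨a, hb, uE i r 0, hune a (k - 1) (by omega) (by omega),
            hune (a + 1) (a + 1) le_rfl hb, rfl⟩
        rcases hver _ hmem with ⟨hx, _⟩ | ⟨_, hx⟩
        · exact absurd hx (not_lt_of_gt hpred)
        · exact absurd h2 (not_lt_of_gt hx)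

/-- given an intermezzo ordering σ of the reduction instance
(respecting `B`, the selection triples, `C¹_ver` and `C²_ver`) and the selected
indices `p_i` from the selection-phase property, the only elements that may lie
strictly between `c^{ℓ,m}` and `c^{ℓ,m+1}` are `u^ℓ_{p_ℓ,m}` and
`u^{m+1}_{p_{m+1},ℓ}` (for `1 ≤ ℓ ≤ m < k`, written 0-indexed). -/
theorem stmt14 (hk : 0 < k) (hq : 0 < q)
    (σ : MCG k q ≃ Fin (Fintype.card (MCG k q)))
    (hB : SatB σ)
    (hsel : SatT σ (Csel1 ∪ Csel2 hq ∪ Csel3 hk))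
    (hver : SatT σ (Cver1 ∪ Cver2))
    (p : Fin k → Fin q)
    (hp : ∀ i : Fin k,
      σ (sE i.castSucc) ≤ σ (cP 0 0 le_rfl hk) ∧
      (∀ (p' : Fin q) (j : Fin (k + 1)), p' < p i →
        σ (uE i p' j) ≤ σ (cP 0 0 le_rfl hk)) ∧
      (∀ j : Fin (k + 1), σ (uE i (p i) j) ≤ σ (cP 0 0 le_rfl hk) ↔ j = 0) ∧
      (∀ (p' : Fin q) (j : Fin (k + 1)), p i < p' →
        σ (cP 0 0 le_rfl hk) < σ (uE i p' j))) :
    ∀ (ℓ m : ℕ) (hℓm : ℓ ≤ m) (hm : m + 1 < k) (x : MCG k q),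
      σ (cP ℓ m hℓm (by omega)) < σ x →
      σ x < σ (cP ℓ (m + 1) (by omega) hm) →
      x = uP ℓ (by omega) (p ⟨ℓ, by omega⟩) (m + 1) (by omega) ∨
      x = uP (m + 1) hm (p ⟨m + 1, hm⟩) (ℓ + 1) (by omega) := by
  intro ℓ m hℓm hm x hx1 hx2
  have h11m : σ (cP 0 0 le_rfl hk) ≤ σ (cP ℓ m hℓm (by omega)) := c11_le_cP hk σ hB _ _
  rcases x with i | (⟨⟨a, b⟩, hab⟩ | ⟨i, r, j⟩)
  · -- x is some s element: impossible
    exfalso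
    rcases Nat.lt_or_ge i.val k with hik | hik
    · have hs := (hp ⟨i.val, hik⟩).1
      have heq : sE (Fin.castSucc ⟨i.val, hik⟩) = (Sum.inl i : MCG k q) :=
        congrArg Sum.inl (Fin.ext rfl)
      rw [heq] at hs
      exact absurd hx1 (not_lt_of_ge (hs.trans h11m))
    · have hik' : i.val = k := by omega
      have hs : σ (Sum.inl i : MCG k q) < σ (cP 0 0 le_rfl hk) :=
        hB _ _ ⟨hik', rfl, rfl⟩
      exact absurd hx1 (not_lt_of_ge (le_of_lt (hs.trans_le h11m)))
  · -- x is some c element: impossible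
    exfalso
    have hab' : a.val ≤ b.val := hab
    have hx : (Sum.inr (Sum.inl ⟨(a, b), hab⟩) : MCG k q) = cP a.val b.val hab' b.isLt := rfl
    rw [hx] at hx1 hx2
    by_cases h1 : a.val < ℓ ∨ (a.val = ℓ ∧ b.val < m)
    · exact absurd hx1 (not_lt_of_gt (cP_lt_cP σ hB _ _ _ _ h1))
    · by_cases h2 : ℓ < a.val ∨ (ℓ = a.val ∧ m + 1 < b.val)
      · exact absurd hx2 (not_lt_of_gt (cP_lt_cP σ hB _ _ _ _ h2))
      · push_neg at h1 h2
        have hor : (a.val = ℓ ∧ b.val = m) ∨ (a.val = ℓ ∧ b.val = m + 1) := by omega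
        rcases hor with ⟨ha, hb⟩ | ⟨ha, hb⟩
        · simp only [ha, hb] at hx1
          exact lt_irrefl _ hx1
        · simp only [ha, hb] at hx2
          exact lt_irrefl _ hx2
  · -- x = u^i_{r,j}
    have hcond : ¬ ((i.val ≠ ℓ ∧ i.val ≠ m + 1) ∨ (i.val = m + 1 ∧ j.val ≠ ℓ + 1) ∨
        (i.val = ℓ ∧ j.val ≠ m + 1)) := by
      intro hc
      have hmem : ((uE i r j, cP ℓ m hℓm (by omega), cP ℓ (m + 1) (by omega) hm) :
          MCG k q × MCG k q × MCG k q) ∈ Cver1 ∪ Cver2 :=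
        Or.inr ⟨i, r, j, ℓ, m, hℓm, hm, hc, rfl⟩
      rcases hver _ hmem with ⟨h, _⟩ | ⟨_, h⟩
      · exact absurd hx1 (not_lt_of_gt h)
      · exact absurd hx2 (not_lt_of_gt h)
    have hcase : (i.val = ℓ ∧ j.val = m + 1) ∨ (i.val = m + 1 ∧ j.val = ℓ + 1) := by omega
    rcases lt_trichotomy r (p i) with hr | hr | hr
    · exfalso
      have hle := (hp i).2.1 r j hr
      exact absurd hx1 (not_lt_of_ge (hle.trans h11m))
    · subst hr
      rcases hcase with ⟨hi, hj⟩ | ⟨hi, hj⟩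
      · left
        have hie : i = (⟨ℓ, by omega⟩ : Fin k) := Fin.ext hi
        have hje : j = (⟨m + 1, by omega⟩ : Fin (k + 1)) := Fin.ext hj
        rw [hie, hje]; exact rfl
      · right
        have hie : i = (⟨m + 1, hm⟩ : Fin k) := Fin.ext hi
        have hje : j = (⟨ℓ + 1, by omega⟩ : Fin (k + 1)) := Fin.ext hj
        rw [hie, hje]; exact rfl
    · exfalso
      have hrv : (p i).val < r.val := hr
      have hq2 : (p i).val + 1 < q := by have := r.isLt; omega
      have hy1 : σ (cP 0 0 le_rfl hk) < σ (uE i ⟨(p i).val + 1, hq2⟩ 0) :=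
        (hp i).2.2.2 _ 0 (Nat.lt_succ_self _)
      have hjpos : (0 : Fin (k + 1)).val < j.val := by
        simp only [Fin.val_zero]; omega
      have hyx : σ (uE i ⟨(p i).val + 1, hq2⟩ 0) < σ (Sum.inr (Sum.inr (i, r, j)) : MCG k q) := by
        apply hB
        refine ⟨rfl, ?_⟩
        rcases Nat.lt_or_ge ((p i).val + 1) r.val with h | h
        · exact Or.inl h
        · have heq : (⟨(p i).val + 1, hq2⟩ : Fin q) = r :=
            Fin.ext (show (p i).val + 1 = r.val by omega)
          exact Or.inr ⟨heq, hjpos⟩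
      exact noU0 hk σ hB hver i ⟨(p i).val + 1, hq2⟩ (ℓ * k + (m + 1)) ℓ (m + 1)
        (by omega) hm rfl hy1 (hyx.trans hx2)
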